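/- Let W̃ be the PPM super channel of a BI-DMC W with P_0 = W(·|0) everywhere positive and P_1 = W(·|1), let X_1,…,X_q be i.i.d. uniform bits and Ỹ the output of W̃ on input X_{1:q}, and for S ⊆ {1,…,q} let P_{Ỹ|X_{S^c}} denote the induced conditional pmf of Ỹ given X_{S^c}. Then for every x_{1:q} ∈ {0,1}^q and every ỹ ∈ 𝒴^{2^q} with W̃(ỹ|x_{1:q}) > 0, the likelihood ratio satisfies μ_0·μ_1 ≤ W̃(ỹ|x_{1:q}) / P_{Ỹ|X_{S^c}}(ỹ|x_{S^c}) ≤ 2^{|S|}, where μ_0 and μ_1 are the minimum positive masses of P_0 and P_1; in particular the per-letter information density is bounded in absolute value by max(log(1/(μ_0μ_1)), |S| log 2). -/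

import Mathlib

open Finset

def IsPMF {𝒵 : Type} [Fintype 𝒵] (P : 𝒵 → ℝ) : Prop :=
  (∀ z, 0 ≤ P z) ∧ ∑ z, P z = 1

/-- Least-significant-bit-first binary-to-decimal map. -/
def dIdx (q : ℕ) (x : Fin q → Bool) : ℕ :=
  ∑ j : Fin q, if x j then 2^(j:ℕ) else 0

lemma sum_two_pow (q : ℕ) : ∑ j ∈ Finset.range q, 2^j = 2^q - 1 := by
  induction q with
  | zero => simp
  | succ q ih =>
    rw [Finset.sum_range_succ, ih, pow_succ]
    have : 0 < 2^q := pow_pos (by norm_num) q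
    omega

lemma dIdx_lt (q : ℕ) (x : Fin q → Bool) : dIdx q x < 2^q := by
  have h1 : dIdx q x ≤ ∑ j : Fin q, 2^(j:ℕ) := by
    apply Finset.sum_le_sum
    intro j _
    split <;> simp
  have h2 : ∑ j : Fin q, 2^(j:ℕ) = 2^q - 1 := by
    rw [Fin.sum_univ_eq_sum_range (fun j => 2^j) q, sum_two_pow]
  have : 0 < 2^q := pow_pos (by norm_num) q
  omega

/-- Position (0-indexed) of the `1` in the PPM symbol encoding `x`. -/
def ppmPos (q : ℕ) (x : Fin q → Bool) : Fin (2^q) := ⟨dIdx q x, dIdx_lt q x⟩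

/-- PPM super channel of the binary-input channel `W`:
`W̃(yt|x) = P1(y_{d(x)}) ∏_{h ≠ d(x)} P0(y_h)`. -/
noncomputable def superCh {𝒴 : Type} [Fintype 𝒴] [DecidableEq 𝒴] (W : Bool → 𝒴 → ℝ)
    (q : ℕ) (x : Fin q → Bool) (yt : Fin (2^q) → 𝒴) : ℝ :=
  W true (yt (ppmPos q x)) * ∏ h ∈ univ.erase (ppmPos q x), W false (yt h)

/-- Conditional output pmf of the PPM super channel given the inputs off `S`:
`P_{Ỹ|X_{S^c}}(yt|x_{S^c}) = 2^{−|S|} ∑_{x_S} W̃(yt|x)`. -/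
noncomputable def condOut {𝒴 : Type} [Fintype 𝒴] [DecidableEq 𝒴] (W : Bool → 𝒴 → ℝ)
    (q : ℕ) (S : Finset (Fin q)) (x : Fin q → Bool) (yt : Fin (2^q) → 𝒴) : ℝ :=
  ((2:ℝ)^S.card)⁻¹ * ∑ xs : {i : Fin q // i ∈ S} → Bool,
    superCh W q (fun i => if h : i ∈ S then xs ⟨i, h⟩ else x i) yt

/-- Information density expectation `∑_{x,yt} 2^{−q} W̃(yt|x) log( P(yt|x_{A^c}) / P(yt|x_{B^c}) )`
(natural logarithm); with `A = ∅` and `B = S` this is `I(X_S;Ỹ|X_{S^c})`. -/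
noncomputable def infoDen {𝒴 : Type} [Fintype 𝒴] [DecidableEq 𝒴] (W : Bool → 𝒴 → ℝ)
    (q : ℕ) (A B : Finset (Fin q)) : ℝ :=
  ∑ x : Fin q → Bool, ∑ yt : Fin (2^q) → 𝒴,
    ((2:ℝ)^q)⁻¹ * superCh W q x yt * Real.log (condOut W q A x yt / condOut W q B x yt)

/-- Same with logarithm base 2 (information measured in bits). -/
noncomputable def infoDen2 {𝒴 : Type} [Fintype 𝒴] [DecidableEq 𝒴] (W : Bool → 𝒴 → ℝ)
    (q : ℕ) (A B : Finset (Fin q)) : ℝ :=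
  ∑ x : Fin q → Bool, ∑ yt : Fin (2^q) → 𝒴,
    ((2:ℝ)^q)⁻¹ * superCh W q x yt * Real.logb 2 (condOut W q A x yt / condOut W q B x yt)

/-- Indicator of a proposition. -/
noncomputable def ind (P : Prop) : ℝ := @ite ℝ P (Classical.propDecidable P) 1 0

/-!
Since `P₀ > 0`, every value of the super channel at a fixed output `ỹ` has the form
`W̃(ỹ|x) = (P₁(y_j) / P₀(y_j)) · C` with `j = d(x) + 1` and `C = ∏_h P₀(y_h) > 0`. Hence every
`W̃(ỹ|x')` is at most `C / μ₀`, while a positive `W̃(ỹ|x)` is at least `μ₁ C`; so `W̃(ỹ|x)` is at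
least `μ₀μ₁` times every term of the average `P_{Ỹ|X_{S^c}}(ỹ|x_{S^c})`, which in turn contains
`W̃(ỹ|x)` itself as one of its `2^{|S|}` terms.
-/

lemma IsPMF.le_one {𝒵 : Type} [Fintype 𝒵] {P : 𝒵 → ℝ} (hP : IsPMF P) (z : 𝒵) : P z ≤ 1 :=
  (single_le_sum (fun z _ => hP.1 z) (mem_univ z)).trans_eq hP.2

section Mean

variable {ι : Type*} [Fintype ι] (f : ι → ℝ)

lemma div_mean_le_card (hf : ∀ i, 0 ≤ f i) (a : ι) :
    f a / ((Fintype.card ι : ℝ)⁻¹ * ∑ i, f i) ≤ Fintype.card ι := by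
  have hcard : (0 : ℝ) < Fintype.card ι := Nat.cast_pos.mpr (Fintype.card_pos_iff.mpr ⟨a⟩)
  refine div_le_of_le_mul₀ (mul_nonneg (by positivity) (sum_nonneg fun i _ => hf i)) hcard.le ?_
  rw [← mul_assoc, mul_inv_cancel₀ hcard.ne', one_mul]
  exact single_le_sum (fun i _ => hf i) (mem_univ a)

lemma le_div_mean (hf : ∀ i, 0 ≤ f i) {a : ι} (ha : 0 < f a) {c : ℝ}
    (hc : ∀ i, c * f i ≤ f a) :
    c ≤ f a / ((Fintype.card ι : ℝ)⁻¹ * ∑ i, f i) := by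
  have hcard : (0 : ℝ) < Fintype.card ι := Nat.cast_pos.mpr (Fintype.card_pos_iff.mpr ⟨a⟩)
  have hsum : 0 < ∑ i, f i :=
    ha.trans_le (single_le_sum (fun i _ => hf i) (mem_univ a))
  rw [le_div_iff₀ (by positivity)]
  calc c * ((Fintype.card ι : ℝ)⁻¹ * ∑ i, f i)
      = (Fintype.card ι : ℝ)⁻¹ * ∑ i, c * f i := by rw [mul_left_comm, mul_sum]
    _ ≤ (Fintype.card ι : ℝ)⁻¹ * ∑ _i : ι, f a := by gcongr with i; exact hc i
    _ = f a := by
      rw [sum_const, card_univ, nsmul_eq_mul, ← mul_assoc, inv_mul_cancel₀ hcard.ne', one_mul]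

end Mean

lemma abs_log_le_max_of_le_of_le {a b r : ℝ} (ha : 0 < a) (har : a ≤ r) (hrb : r ≤ b) :
    |Real.log r| ≤ max (Real.log (1 / a)) (Real.log b) := by
  have hr : 0 < r := ha.trans_le har
  rw [abs_le, one_div, Real.log_inv]
  exact ⟨by linarith [le_max_left (-Real.log a) (Real.log b), Real.log_le_log ha har],
    (Real.log_le_log hr hrb).trans (le_max_right _ _)⟩

section SuperChannel

variable {𝒴 : Type} [Fintype 𝒴] [DecidableEq 𝒴] {W : Bool → 𝒴 → ℝ} {q : ℕ}

lemma superCh_eq_div_mul_prod (hpos : ∀ y, 0 < W false y) (x : Fin q → Bool)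
    (yt : Fin (2^q) → 𝒴) :
    superCh W q x yt = W true (yt (ppmPos q x)) / W false (yt (ppmPos q x)) *
      ∏ h, W false (yt h) := by
  rw [superCh, ← mul_prod_erase univ (fun h => W false (yt h)) (mem_univ (ppmPos q x))]
  field_simp [(hpos (yt (ppmPos q x))).ne']

lemma superCh_nonneg (hW : ∀ b, IsPMF (W b)) (x : Fin q → Bool) (yt : Fin (2^q) → 𝒴) :
    0 ≤ superCh W q x yt :=
  mul_nonneg ((hW true).1 _) (prod_nonneg fun _ _ => (hW false).1 _)

lemma superCh_le_prod_div (hW : ∀ b, IsPMF (W b)) (hpos : ∀ y, 0 < W false y) {μ0 : ℝ}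
    (hμ0 : 0 < μ0) (hμ0min : ∀ y, μ0 ≤ W false y) (x : Fin q → Bool) (yt : Fin (2^q) → 𝒴) :
    superCh W q x yt ≤ (∏ h, W false (yt h)) / μ0 := by
  rw [superCh_eq_div_mul_prod hpos, div_eq_inv_mul _ μ0]
  gcongr
  · exact prod_nonneg fun _ _ => (hpos _).le
  · calc W true (yt (ppmPos q x)) / W false (yt (ppmPos q x))
        ≤ 1 / W false (yt (ppmPos q x)) :=
          div_le_div_of_nonneg_right ((hW true).le_one _) (hpos _).le
      _ ≤ μ0⁻¹ := by rw [one_div]; exact inv_anti₀ hμ0 (hμ0min _)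

lemma mul_prod_le_superCh (hW : ∀ b, IsPMF (W b)) (hpos : ∀ y, 0 < W false y) {μ1 : ℝ}
    {x : Fin q → Bool} {yt : Fin (2^q) → 𝒴} (hμ1 : μ1 ≤ W true (yt (ppmPos q x))) :
    μ1 * ∏ h, W false (yt h) ≤ superCh W q x yt := by
  rw [superCh_eq_div_mul_prod hpos]
  gcongr
  · exact prod_nonneg fun _ _ => (hpos _).le
  · exact hμ1.trans (le_div_self ((hW true).1 _) (hpos _) ((hW false).le_one _))

lemma superCh_pos_imp_ne_zero {x : Fin q → Bool} {yt : Fin (2^q) → 𝒴}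
    (hx : 0 < superCh W q x yt) : W true (yt (ppmPos q x)) ≠ 0 := by
  intro h
  rw [superCh, h, zero_mul] at hx
  exact hx.false

lemma mul_superCh_le_superCh (hW : ∀ b, IsPMF (W b)) (hpos : ∀ y, 0 < W false y)
    {μ0 μ1 : ℝ} (hμ0 : 0 < μ0) (hμ1 : 0 < μ1) (hμ0min : ∀ y, W false y ≠ 0 → μ0 ≤ W false y)
    (hμ1min : ∀ y, W true y ≠ 0 → μ1 ≤ W true y) {x : Fin q → Bool} {yt : Fin (2^q) → 𝒴}
    (hx : 0 < superCh W q x yt) (x' : Fin q → Bool) :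
    μ0 * μ1 * superCh W q x' yt ≤ superCh W q x yt := by
  have hμ0min' : ∀ y, μ0 ≤ W false y := fun y => hμ0min y (hpos y).ne'
  calc μ0 * μ1 * superCh W q x' yt
      ≤ μ0 * μ1 * ((∏ h, W false (yt h)) / μ0) := by
        gcongr; exact superCh_le_prod_div hW hpos hμ0 hμ0min' x' yt
    _ = μ1 * ∏ h, W false (yt h) := by field_simp
    _ ≤ superCh W q x yt :=
        mul_prod_le_superCh hW hpos (hμ1min _ (superCh_pos_imp_ne_zero hx))

lemma condOut_eq_mean (S : Finset (Fin q)) (x : Fin q → Bool) (yt : Fin (2^q) → 𝒴) :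
    condOut W q S x yt = (Fintype.card ({i // i ∈ S} → Bool) : ℝ)⁻¹ *
      ∑ xs : {i // i ∈ S} → Bool,
        superCh W q (fun i => if h : i ∈ S then xs ⟨i, h⟩ else x i) yt := by
  simp only [condOut, Fintype.card_fun, Fintype.card_bool, Fintype.card_coe, Nat.cast_pow,
    Nat.cast_ofNat]

lemma superCh_restrict (S : Finset (Fin q)) (x : Fin q → Bool) (yt : Fin (2^q) → 𝒴) :
    superCh W q (fun i => if h : i ∈ S then (fun p : {i // i ∈ S} => x p) ⟨i, h⟩ else x i) yt =
      superCh W q x yt := by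
  simp only [dite_eq_ite, ite_self]

lemma superCh_div_condOut_le (hW : ∀ b, IsPMF (W b)) (S : Finset (Fin q))
    (x : Fin q → Bool) (yt : Fin (2^q) → 𝒴) :
    superCh W q x yt / condOut W q S x yt ≤ (2:ℝ)^S.card := by
  have h := div_mean_le_card
    (fun xs : {i // i ∈ S} → Bool =>
      superCh W q (fun i => if h : i ∈ S then xs ⟨i, h⟩ else x i) yt)
    (fun _ => superCh_nonneg hW _ yt) (fun p => x p)
  rwa [superCh_restrict, ← condOut_eq_mean, Fintype.card_fun, Fintype.card_bool,
    Fintype.card_coe, Nat.cast_pow, Nat.cast_ofNat] at h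

lemma mul_le_superCh_div_condOut (hW : ∀ b, IsPMF (W b)) (hpos : ∀ y, 0 < W false y)
    {μ0 μ1 : ℝ} (hμ0 : 0 < μ0) (hμ1 : 0 < μ1) (hμ0min : ∀ y, W false y ≠ 0 → μ0 ≤ W false y)
    (hμ1min : ∀ y, W true y ≠ 0 → μ1 ≤ W true y) (S : Finset (Fin q))
    {x : Fin q → Bool} {yt : Fin (2^q) → 𝒴} (hx : 0 < superCh W q x yt) :
    μ0 * μ1 ≤ superCh W q x yt / condOut W q S x yt := by
  have h := le_div_mean
    (fun xs : {i // i ∈ S} → Bool =>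
      superCh W q (fun i => if h : i ∈ S then xs ⟨i, h⟩ else x i) yt)
    (fun _ => superCh_nonneg hW _ yt) (a := fun p => x p) (c := μ0 * μ1)
    (by simpa only [superCh_restrict] using hx)
    (fun _ => by simpa only [superCh_restrict] using
      mul_superCh_le_superCh hW hpos hμ0 hμ1 hμ0min hμ1min hx _)
  rwa [superCh_restrict, ← condOut_eq_mean] at h

end SuperChannel

/-- Bounds on the PPM super-channel likelihood ratio: for any `S ⊆ {1,…,q}` and any
input/output pair with `W̃(yt|x) > 0`,
`μ₀μ₁ ≤ W̃(yt|x)/P_{Ỹ|X_{S^c}}(yt|x_{S^c}) ≤ 2^{|S|}`, and the per-letter information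
density is bounded in absolute value by `max(log(1/(μ₀μ₁)), |S| log 2)`. -/
theorem stmt7 {𝒴 : Type} [Fintype 𝒴] [DecidableEq 𝒴]
    (W : Bool → 𝒴 → ℝ) (hW : ∀ x, IsPMF (W x)) (hpos : ∀ y, 0 < W false y)
    (q : ℕ) (S : Finset (Fin q))
    (μ0 μ1 : ℝ) (hμ0 : 0 < μ0) (hμ1 : 0 < μ1)
    (hμ0min : ∀ y, W false y ≠ 0 → μ0 ≤ W false y)
    (hμ1min : ∀ y, W true y ≠ 0 → μ1 ≤ W true y) :
    ∀ (x : Fin q → Bool) (yt : Fin (2^q) → 𝒴), 0 < superCh W q x yt →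
      μ0 * μ1 ≤ superCh W q x yt / condOut W q S x yt ∧
      superCh W q x yt / condOut W q S x yt ≤ (2:ℝ)^S.card ∧
      |Real.log (superCh W q x yt / condOut W q S x yt)|
        ≤ max (Real.log (1/(μ0*μ1))) (S.card * Real.log 2) := by
  intro x yt hx
  have hlower := mul_le_superCh_div_condOut hW hpos hμ0 hμ1 hμ0min hμ1min S hx
  have hupper := superCh_div_condOut_le hW S x yt
  refine ⟨hlower, hupper, ?_⟩
  rw [← Real.log_pow]
  exact abs_log_le_max_of_le_of_le (by positivity) hlower hupper
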